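/- arXiv:2311.00989 — 2 statements merged into one kernel-verified Lean document; each statement's English description precedes it below -/
import Mathlib

section
/- Let p ≥ 2 be an integer, e₀ ≥ 1 an integer, and γ a real number. Then the infimum of the set { ⌈γ + log_p(a)⌉ − γ − log_p(a) : a ≥ 1 an integer such that ⌈γ + log_p(a)⌉ is divisible by e₀ } is equal to 0. -/
/-- For integers `p ≥ 2`, `e₀ ≥ 1` and a real `γ`, the infimum of
`⌈γ + log_p a⌉ - γ - log_p a` over integers `a ≥ 1` with `e₀ ∣ ⌈γ + log_p a⌉` is `0`. -/
theorem stmt_4 (p e₀ : ℕ) (hp : 2 ≤ p) (he : 1 ≤ e₀) (γ : ℝ) :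
    sInf {x : ℝ | ∃ a : ℕ, 1 ≤ a ∧
      (e₀ : ℤ) ∣ ⌈γ + Real.log a / Real.log p⌉ ∧
      x = (⌈γ + Real.log a / Real.log p⌉ : ℝ) - γ - Real.log a / Real.log p} = 0 := by
  have hq1 : (1:ℝ) < (p:ℝ) := by exact_mod_cast lt_of_lt_of_le one_lt_two hp
  have hq0 : (0:ℝ) < (p:ℝ) := lt_trans one_pos hq1
  have hc : 0 < Real.log p := Real.log_pos hq1
  set c := Real.log p with hcdef
  -- key construction
  have key : ∀ ε : ℝ, 0 < ε → ∃ a : ℕ, 1 ≤ a ∧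
      (e₀:ℤ) ∣ ⌈γ + Real.log a / c⌉ ∧
      0 ≤ (⌈γ + Real.log a / c⌉ : ℝ) - γ - Real.log a / c ∧
      (⌈γ + Real.log a / c⌉ : ℝ) - γ - Real.log a / c < ε := by
    intro ε hε
    set δ := min ε 1 with hδdef
    have hδ0 : 0 < δ := lt_min hε one_pos
    have hδ1 : δ ≤ 1 := min_le_right _ _
    have hδε : δ ≤ ε := min_le_left _ _
    have hd : (0:ℝ) < (p:ℝ) ^ δ - 1 := by
      have : (1:ℝ) < (p:ℝ) ^ δ := Real.one_lt_rpow_iff_of_pos hq0 |>.mpr (Or.inl ⟨hq1, hδ0⟩)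
      linarith
    set D : ℝ := 1 / ((p:ℝ) ^ δ - 1) with hDdef
    have hD : 0 < D := by positivity
    obtain ⟨n, hn⟩ := exists_nat_ge (γ + δ + D / c)
    set N : ℤ := (e₀ : ℤ) * (n + 1) with hNdef
    have hNn : (n:ℝ) + 1 ≤ (N:ℝ) := by
      have he' : (1:ℤ) ≤ (e₀:ℤ) := by exact_mod_cast he
      have : ((n:ℤ) + 1) ≤ N := by
        rw [hNdef]; nlinarith [Int.ofNat_nonneg n]
      exact_mod_cast this
    set t : ℝ := (N:ℝ) - γ with htdef
    have ht : δ + D / c + 1 ≤ t := by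
      rw [htdef]; linarith
    -- lower bound on p ^ (t - δ)
    have hexp : (p:ℝ) ^ (t - δ) = Real.exp (c * (t - δ)) := Real.rpow_def_of_pos hq0 _
    have h1 : D + c + 1 ≤ (p:ℝ) ^ (t - δ) := by
      rw [hexp]
      have h2 : c * (t - δ) + 1 ≤ Real.exp (c * (t - δ)) := Real.add_one_le_exp _
      have h3 : D / c + 1 ≤ t - δ := by linarith
      have h4 : D + c ≤ c * (t - δ) := by
        have := mul_le_mul_of_nonneg_left h3 (le_of_lt hc)
        have hDc : c * (D / c) = D := by field_simp
        nlinarith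
      linarith
    have hgt1 : (1:ℝ) ≤ (p:ℝ) ^ (t - δ) := by linarith
    -- gap is bigger than 1
    have hsplit : (p:ℝ) ^ t = (p:ℝ) ^ (t - δ) * (p:ℝ) ^ δ := by
      rw [← Real.rpow_add hq0]; ring_nf
    have hgap : (p:ℝ) ^ (t - δ) + 1 < (p:ℝ) ^ t := by
      have hDgap : D * ((p:ℝ) ^ δ - 1) = 1 := by
        rw [hDdef]; field_simp
      have : D * ((p:ℝ) ^ δ - 1) < (p:ℝ) ^ (t - δ) * ((p:ℝ) ^ δ - 1) := by
        apply mul_lt_mul_of_pos_right _ hd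
        linarith
      rw [hDgap] at this
      nlinarith
    set a : ℕ := ⌊(p:ℝ) ^ t⌋₊ with hadef
    have hq_t_nonneg : (0:ℝ) ≤ (p:ℝ) ^ t := le_of_lt (Real.rpow_pos_of_pos hq0 _)
    have haq : (a:ℝ) ≤ (p:ℝ) ^ t := Nat.floor_le hq_t_nonneg
    have halow : (p:ℝ) ^ t - 1 < (a:ℝ) := Nat.sub_one_lt_floor _
    have hagt : (p:ℝ) ^ (t - δ) < (a:ℝ) := by linarith
    have ha1 : (1:ℝ) ≤ (a:ℝ) := by linarith
    have ha1' : 1 ≤ a := by exact_mod_cast ha1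
    have ha0 : (0:ℝ) < (a:ℝ) := by linarith
    -- bounds on log a / c
    have hlog_le : Real.log a ≤ t * c := by
      have := Real.log_le_log ha0 haq
      rwa [Real.log_rpow hq0] at this
    have hlog_gt : (t - δ) * c < Real.log a := by
      have := Real.log_lt_log (Real.rpow_pos_of_pos hq0 _) hagt
      rwa [Real.log_rpow hq0] at this
    have hL_le : Real.log a / c ≤ t := by
      rw [div_le_iff₀ hc]; linarith
    have hL_gt : t - δ < Real.log a / c := by
      rw [lt_div_iff₀ hc]; linarith
    have hceil : ⌈γ + Real.log a / c⌉ = N := by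
      rw [Int.ceil_eq_iff]
      constructor
      · push_cast; linarith
      · push_cast; linarith
    refine ⟨a, ha1', ?_, ?_, ?_⟩
    · rw [hceil]; exact ⟨n + 1, rfl⟩
    · rw [hceil]; linarith
    · rw [hceil]; linarith
  -- assemble
  set S := {x : ℝ | ∃ a : ℕ, 1 ≤ a ∧
      (e₀ : ℤ) ∣ ⌈γ + Real.log a / c⌉ ∧
      x = (⌈γ + Real.log a / c⌉ : ℝ) - γ - Real.log a / c} with hSdef
  obtain ⟨a₀, h1₀, h2₀, h3₀, h4₀⟩ := key 1 one_pos
  have hne : S.Nonempty := ⟨_, a₀, h1₀, h2₀, rfl⟩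
  have hbdd : BddBelow S := by
    refine ⟨0, fun x hx => ?_⟩
    obtain ⟨a, _, _, hxeq⟩ := hx
    rw [hxeq]
    have := Int.le_ceil (γ + Real.log a / c)
    linarith
  apply le_antisymm
  · rw [Real.sInf_le_iff hbdd hne]
    intro ε hε
    obtain ⟨a, h1, h2, h3, h4⟩ := key ε hε
    exact ⟨_, ⟨a, h1, h2, rfl⟩, by linarith⟩
  · refine le_csInf hne fun x hx => ?_
    obtain ⟨a, _, _, hxeq⟩ := hx
    rw [hxeq]
    have := Int.le_ceil (γ + Real.log a / c)
    linarith
end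

section
/- Let p ≥ 2 be an integer and let f: ℕ → ℝ be defined by f(a) = a/(p^{⌈log_p(a) + c⌉} − 1) for a fixed real c > 0. Then sup_{a ≥ 1} f(a) ≥ p^{−c}, i.e., for every δ > 0 there exists a with a/(p^{⌈log_p(a)+c⌉} − 1) > p^{−c} − δ. -/
/-- For `p ≥ 2` and `c > 0`, the supremum over `a ≥ 1` of
`a/(p^{⌈log_p a + c⌉} - 1)` is at least `p^{-c}`: for every `δ > 0` there is `a ≥ 1`
with `a/(p^{⌈log_p a + c⌉} - 1) > p^{-c} - δ`. -/
theorem stmt_18 (p : ℕ) (hp : 2 ≤ p) (c : ℝ) (hc : 0 < c) :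
    ∀ δ : ℝ, 0 < δ → ∃ a : ℕ, 1 ≤ a ∧
      (a : ℝ) / ((p : ℝ) ^ (⌈Real.log a / Real.log p + c⌉) - 1) >
        (p : ℝ) ^ (-c) - δ := by
  intro δ hδ
  have hp1 : (1:ℝ) < (p:ℝ) := by exact_mod_cast lt_of_lt_of_le one_lt_two hp
  have hp0 : (0:ℝ) < (p:ℝ) := by linarith
  have hlogp : 0 < Real.log p := Real.log_pos hp1
  obtain ⟨n0, hn0⟩ := pow_unbounded_of_one_lt (1/δ) hp1
  set n : ℕ := max n0 (⌈c⌉₊ + 1) with hn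
  have hnc : c + 1 ≤ (n:ℝ) := by
    have h1 : (⌈c⌉₊ + 1 : ℕ) ≤ n := le_max_right _ _
    have h2 : c ≤ (⌈c⌉₊ : ℝ) := Nat.le_ceil c
    have : ((⌈c⌉₊ + 1 : ℕ) : ℝ) ≤ (n:ℝ) := by exact_mod_cast h1
    push_cast at this
    linarith
  have hpn0 : (p:ℝ) ^ n0 ≤ (p:ℝ) ^ n :=
    pow_le_pow_right₀ (le_of_lt hp1) (le_max_left _ _)
  have hpnδ : 1/δ < (p:ℝ)^n := lt_of_lt_of_le hn0 hpn0
  set x : ℝ := (p:ℝ) ^ ((n:ℝ) - c) with hx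
  have hx_ge : (p:ℝ) ≤ x := by
    calc (p:ℝ) = (p:ℝ) ^ (1:ℝ) := (Real.rpow_one _).symm
      _ ≤ x := Real.rpow_le_rpow_of_exponent_le (le_of_lt hp1) (by linarith)
  have hx1 : (1:ℝ) ≤ x := by linarith
  have ha1 : 1 ≤ ⌊x⌋₊ := Nat.le_floor (by exact_mod_cast hx1)
  have hafl : (⌊x⌋₊ : ℝ) ≤ x := Nat.floor_le (by linarith)
  have haf : x - 1 < (⌊x⌋₊ : ℝ) := Nat.sub_one_lt_floor x
  have ha0 : (0:ℝ) < (⌊x⌋₊ : ℝ) := by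
    have : (1:ℕ) ≤ ⌊x⌋₊ := ha1
    exact_mod_cast lt_of_lt_of_le Nat.zero_lt_one this
  -- x / p ≤ x - 1
  have hp2 : (2:ℝ) ≤ (p:ℝ) := by exact_mod_cast hp
  have hxp : x / p ≤ x - 1 := by
    rw [div_le_iff₀ hp0]
    nlinarith [mul_nonneg (by linarith : (0:ℝ) ≤ x - p) (by linarith : (0:ℝ) ≤ (p:ℝ) - 1),
      mul_nonneg hp0.le (by linarith : (0:ℝ) ≤ (p:ℝ) - 2)]
  -- log x = (n - c) * log p
  have hlogx : Real.log x = ((n:ℝ) - c) * Real.log p := Real.log_rpow hp0 _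
  -- upper bound on ceiling argument
  have hub : Real.log ⌊x⌋₊ / Real.log p + c ≤ (n:ℝ) := by
    have h1 : Real.log ⌊x⌋₊ ≤ Real.log x := Real.log_le_log ha0 hafl
    have h2 : Real.log ⌊x⌋₊ / Real.log p ≤ (n:ℝ) - c := by
      rw [div_le_iff₀ hlogp]
      rw [hlogx] at h1
      linarith
    linarith
  -- lower bound
  have hlb : (n:ℝ) - 1 < Real.log ⌊x⌋₊ / Real.log p + c := by
    have hxp2 : x / p = (p:ℝ) ^ ((n:ℝ) - 1 - c) := by
      rw [show (n:ℝ) - 1 - c = ((n:ℝ) - c) + (-1) by ring, Real.rpow_add hp0,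
        Real.rpow_neg_one, hx]
      ring
    have h1 : Real.log (x / p) < Real.log ⌊x⌋₊ := by
      apply Real.log_lt_log
      · rw [hxp2]; exact Real.rpow_pos_of_pos hp0 _
      · linarith
    have h2 : Real.log (x / p) = ((n:ℝ) - 1 - c) * Real.log p := by
      rw [hxp2]; exact Real.log_rpow hp0 _
    rw [h2] at h1
    have h3 : (n:ℝ) - 1 - c < Real.log ⌊x⌋₊ / Real.log p := by
      rw [lt_div_iff₀ hlogp]; linarith
    linarith
  have hceil : ⌈Real.log ⌊x⌋₊ / Real.log p + c⌉ = (n:ℤ) := by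
    rw [Int.ceil_eq_iff]
    constructor
    · push_cast; linarith
    · push_cast; linarith
  refine ⟨⌊x⌋₊, ha1, ?_⟩
  rw [hceil, zpow_natCast]
  have hn1 : 1 ≤ n := le_trans (Nat.le_add_left 1 ⌈c⌉₊) (le_max_right _ _)
  have hpn1 : (1:ℝ) < (p:ℝ)^n := one_lt_pow₀ hp1 (by omega)
  have hden : (0:ℝ) < (p:ℝ)^n - 1 := by linarith
  have hpninv : (p:ℝ)^(-(n:ℝ)) < δ := by
    rw [Real.rpow_neg (le_of_lt hp0), Real.rpow_natCast]
    rw [div_lt_iff₀ hδ] at hpnδ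
    rw [inv_lt_iff_one_lt_mul₀ (by positivity)]
    nlinarith
  have hxdiv : x / (p:ℝ)^n = (p:ℝ)^(-c) := by
    rw [hx, ← Real.rpow_natCast (p:ℝ) n, ← Real.rpow_sub hp0]
    congr 1
    ring
  have key : (x - 1) / (p:ℝ)^n = (p:ℝ)^(-c) - (p:ℝ)^(-(n:ℝ)) := by
    rw [sub_div, hxdiv]
    congr 1
    rw [Real.rpow_neg (le_of_lt hp0), Real.rpow_natCast, one_div]
  have hpn_pos : (0:ℝ) < (p:ℝ)^n := by positivity
  have step1 : (x - 1) / (p:ℝ)^n < (⌊x⌋₊:ℝ) / (p:ℝ)^n := by gcongr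
  have step2 : (⌊x⌋₊:ℝ) / (p:ℝ)^n < (⌊x⌋₊:ℝ) / ((p:ℝ)^n - 1) :=
    div_lt_div_of_pos_left ha0 hden (by linarith)
  linarith
end
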